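/- arXiv:1911.08451 — 7 statements merged into one kernel-verified Lean document; each statement's English description precedes it below -/
import Mathlib

section
/- If T is a tree on n vertices, then ρ(T) ≤ √(n−1), with equality if and only if T is isomorphic to the star K_{1,n−1}. -/
open Matrix SimpleGraph

attribute [local instance] Classical.propDecidable

/-- The spectral radius of a finite simple graph: the largest eigenvalue of its
adjacency matrix (as the supremum of its real spectrum). -/
noncomputable def specRad {V : Type*} [Fintype V] [DecidableEq V] (G : SimpleGraph V) : ℝ :=
  sSup (spectrum ℝ (G.adjMatrix ℝ))

/-!
For an eigenpair `A v = μ v` of the adjacency matrix of a forest, `A² v = μ² v`, and the row of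
`A²` at a vertex `i` sums to `∑_{k ~ i} deg k`, the number of walks `i – k – j`. Sending such a
walk to `j`, or to `k` when `j = i`, is injective because a forest has no 3- or 4-cycles, so the
row sum is at most `n - 1`; evaluating `A² v = μ² v` at a vertex where `|v|` is maximal gives
`μ² ≤ n - 1`. If equality holds, every such vertex reaches all others in at most two steps and
so does every vertex two steps away from it; without short cycles this forces a vertex adjacent
to all others, i.e. a star, and `(√(n - 1), 1, …, 1)` is an eigenvector of the star.
-/

open Finset

theorem Matrix.mem_spectrum_iff_exists_mulVec_eq_smul {K n : Type*} [Field K] [Fintype n]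
    [DecidableEq n] {A : Matrix n n K} {μ : K} :
    μ ∈ spectrum K A ↔ ∃ v, v ≠ 0 ∧ A *ᵥ v = μ • v := by
  rw [← Matrix.spectrum_toLin', ← Module.End.hasEigenvalue_iff_mem_spectrum,
    Module.End.hasEigenvalue_iff, Submodule.ne_bot_iff]
  simp only [Module.End.mem_eigenspace_iff, Matrix.toLin'_apply, and_comm]

theorem Matrix.abs_mul_abs_le_sum_mul_abs_of_mulVec_eq_smul {n : Type*} [Fintype n]
    {B : Matrix n n ℝ} (hB : ∀ i j, 0 ≤ B i j) {l : ℝ} {v : n → ℝ} (hv : B *ᵥ v = l • v)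
    (i : n) : |l| * |v i| ≤ ∑ j, B i j * |v j| := by
  have hi : ∑ j, B i j * v j = l * v i := by simpa [mulVec, dotProduct] using congrFun hv i
  calc |l| * |v i| = |∑ j, B i j * v j| := by rw [hi, abs_mul]
    _ ≤ ∑ j, |B i j * v j| := abs_sum_le_sum_abs _ _
    _ = ∑ j, B i j * |v j| := by simp_rw [abs_mul, abs_of_nonneg (hB i _)]

namespace SimpleGraph

variable {V : Type*} {G : SimpleGraph V}

theorem IsAcyclic.eq_of_isPath (hG : G.IsAcyclic) {a b : V} {p q : G.Walk a b}
    (hp : p.IsPath) (hq : q.IsPath) : p = q :=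
  congrArg Subtype.val ((hG.subsingleton_path a b).elim ⟨p, hp⟩ ⟨q, hq⟩)

theorem IsAcyclic.not_adj_of_adj_of_adj (hG : G.IsAcyclic) {a b c : V} (hab : G.Adj a b)
    (hbc : G.Adj b c) : ¬G.Adj a c := fun hac => by
  have h := congrArg Walk.length <| hG.eq_of_isPath (p := .cons hac .nil)
    (q := .cons hab (.cons hbc .nil)) (by simp [hac.ne]) (by simp [hab.ne, hbc.ne, hac.ne])
  simp at h

theorem IsAcyclic.eq_of_adj_adj_of_adj_adj (hG : G.IsAcyclic) {a b c d : V} (hac : a ≠ c)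
    (hab : G.Adj a b) (hbc : G.Adj b c) (had : G.Adj a d) (hdc : G.Adj d c) : b = d := by
  have h := hG.eq_of_isPath (p := .cons hab (.cons hbc .nil)) (q := .cons had (.cons hdc .nil))
    (by simp [hab.ne, hbc.ne, hac]) (by simp [had.ne, hdc.ne, hac])
  simp only [Walk.cons.injEq] at h
  exact h.1

theorem IsAcyclic.false_of_adj_adj_of_adj_adj_adj (hG : G.IsAcyclic) {a b c d e : V}
    (hac : a ≠ c) (hae : a ≠ e) (hdc : d ≠ c) (hab : G.Adj a b) (hbc : G.Adj b c)
    (had : G.Adj a d) (hde : G.Adj d e) (hec : G.Adj e c) : False := by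
  have h := congrArg Walk.length <| hG.eq_of_isPath (p := .cons hab (.cons hbc .nil))
    (q := .cons had (.cons hde (.cons hec .nil))) (by simp [hab.ne, hbc.ne, hac])
    (by simp [had.ne, hde.ne, hec.ne, hac, hae, hdc])
  simp at h

def ReachesAllInTwo (G : SimpleGraph V) (i : V) : Prop :=
  ∀ w, w ≠ i → G.Adj i w ∨ ∃ k, G.Adj i k ∧ G.Adj k w

theorem IsAcyclic.eq_of_adj_of_reachesAllInTwo (hG : G.IsAcyclic) {i k w l : V}
    (hik : G.Adj i k) (hkw : G.Adj k w) (hwi : w ≠ i) (hw : G.ReachesAllInTwo w)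
    (hil : G.Adj i l) : l = k := by
  by_contra hlk
  have hlw : l ≠ w := by
    rintro rfl
    exact hG.not_adj_of_adj_of_adj hik hkw hil
  rcases hw l hlw with hwl | ⟨k', hwk', hk'l⟩
  · exact hlk (hG.eq_of_adj_adj_of_adj_adj hwi.symm hik hkw hil hwl.symm).symm
  · have hik' : i ≠ k' := by
      rintro rfl
      exact hG.not_adj_of_adj_of_adj hik hkw hwk'.symm
    exact hG.false_of_adj_adj_of_adj_adj_adj hwi.symm hik' hlw hik hkw hil hk'l.symm hwk'.symm

theorem IsAcyclic.exists_forall_adj (hG : G.IsAcyclic) {i : V} (hi : G.ReachesAllInTwo i)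
    (hreach : ∀ {k w}, G.Adj i k → G.Adj k w → G.ReachesAllInTwo w) :
    ∃ c, ∀ w, w ≠ c → G.Adj c w := by
  by_cases hc : ∀ w, w ≠ i → G.Adj i w
  · exact ⟨i, hc⟩
  push Not at hc
  obtain ⟨w, hwi, hiw⟩ := hc
  obtain ⟨k, hik, hkw⟩ := (hi w hwi).resolve_left hiw
  have hnbr : ∀ {l}, G.Adj i l → l = k :=
    hG.eq_of_adj_of_reachesAllInTwo hik hkw hwi (hreach hik hkw)
  refine ⟨k, fun z hzk => ?_⟩
  obtain rfl | hzi := eq_or_ne z i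
  · exact hik.symm
  rcases hi z hzi with hiz | ⟨k', hik', hk'z⟩
  · exact absurd (hnbr hiz) hzk
  · rwa [hnbr hik'] at hk'z

theorem IsAcyclic.adj_iff_of_forall_adj (hG : G.IsAcyclic) {c : V}
    (hc : ∀ w, w ≠ c → G.Adj c w) {u w : V} :
    G.Adj u w ↔ (u = c ∧ w ≠ c) ∨ (w = c ∧ u ≠ c) := by
  refine ⟨fun h => ?_, ?_⟩
  · by_cases hu : u = c
    · exact .inl ⟨hu, hu ▸ h.ne'⟩
    · by_cases hw : w = c
      · exact .inr ⟨hw, hu⟩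
      · exact absurd (hc w hw) (hG.not_adj_of_adj_of_adj (hc u hu) h)
  · rintro (⟨rfl, hw⟩ | ⟨rfl, hu⟩)
    · exact hc w hw
    · exact (hc u hu).symm

theorem Iso.forall_adj_symm_inl {β : Type*} (e : G ≃g completeBipartiteGraph (Fin 1) β) :
    ∀ w, w ≠ e.symm (.inl 0) → G.Adj (e.symm (.inl 0)) w := by
  intro w hw
  rw [← e.map_adj_iff, e.apply_symm_apply]
  rcases h : e w with j | y
  · refine absurd ?_ hw
    rw [Subsingleton.elim 0 j, ← h, e.symm_apply_apply]
  · simp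

section Finite

variable [Fintype V]

noncomputable def neighborDegreeSum (G : SimpleGraph V) (i : V) : ℕ :=
  ∑ k ∈ G.neighborFinset i, G.degree k

noncomputable def twoStepEnd (i : V) (p : Σ _ : V, V) : V :=
  if p.2 = i then p.1 else p.2

theorem mapsTo_twoStepEnd (i : V) :
    Set.MapsTo (twoStepEnd i) ((G.neighborFinset i).sigma fun k => G.neighborFinset k)
      (univ.erase i) := by
  rintro ⟨k, j⟩ hp
  simp only [coe_sigma, Set.mem_sigma_iff, mem_coe, mem_neighborFinset] at hp
  simp only [twoStepEnd, coe_erase, coe_univ, Set.mem_sdiff, Set.mem_univ,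
    Set.mem_singleton_iff, true_and]
  split_ifs with h
  · exact hp.1.ne'
  · exact h

theorem IsAcyclic.injOn_twoStepEnd (hG : G.IsAcyclic) (i : V) :
    Set.InjOn (twoStepEnd i) ((G.neighborFinset i).sigma fun k => G.neighborFinset k) := by
  rintro ⟨k, j⟩ hp ⟨k', j'⟩ hq h
  simp only [coe_sigma, Set.mem_sigma_iff, mem_coe, mem_neighborFinset] at hp hq
  obtain ⟨hik, hkj⟩ := hp
  obtain ⟨hik', hkj'⟩ := hq
  simp only [twoStepEnd] at h
  split_ifs at h with hj hj' hj'
  · subst hj hj' h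
    rfl
  · subst hj h
    exact absurd hik (hG.not_adj_of_adj_of_adj hik' hkj')
  · subst hj' h
    exact absurd hik' (hG.not_adj_of_adj_of_adj hik hkj)
  · subst h
    obtain rfl := hG.eq_of_adj_adj_of_adj_adj (Ne.symm hj) hik hkj hik' hkj'
    rfl

theorem IsAcyclic.neighborDegreeSum_le (hG : G.IsAcyclic) (i : V) :
    G.neighborDegreeSum i ≤ Fintype.card V - 1 := by
  have h := card_le_card_of_injOn _ (mapsTo_twoStepEnd i) (hG.injOn_twoStepEnd i)
  rwa [card_sigma, card_erase_of_mem (mem_univ i), card_univ] at h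

theorem IsAcyclic.reachesAllInTwo_of_neighborDegreeSum_eq (hG : G.IsAcyclic) {i : V}
    (h : G.neighborDegreeSum i = Fintype.card V - 1) : G.ReachesAllInTwo i := by
  have hsurj := surjOn_of_injOn_of_card_le _ (mapsTo_twoStepEnd i) (hG.injOn_twoStepEnd i)
    (by rw [card_sigma, card_erase_of_mem (mem_univ i), card_univ]; exact h.ge)
  intro w hw
  obtain ⟨⟨k, j⟩, hp, rfl⟩ := hsurj (by simpa using hw)
  simp only [coe_sigma, Set.mem_sigma_iff, mem_coe, mem_neighborFinset] at hp
  simp only [twoStepEnd]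
  split_ifs
  · exact .inl hp.1
  · exact .inr ⟨k, hp⟩

theorem adjMatrix_mul_self_nonneg (i j : V) : 0 ≤ (G.adjMatrix ℝ * G.adjMatrix ℝ) i j := by
  rw [adjMatrix_mul_apply]
  exact sum_nonneg fun k _ => by rw [adjMatrix_apply]; positivity

theorem adjMatrix_mul_self_pos {i j k : V} (hik : G.Adj i k) (hkj : G.Adj k j) :
    0 < (G.adjMatrix ℝ * G.adjMatrix ℝ) i j := by
  rw [adjMatrix_mul_apply]
  refine lt_of_lt_of_le ?_ (single_le_sum (fun k _ => ?_) ((mem_neighborFinset _ _ _).2 hik))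
  · simp [hkj]
  · rw [adjMatrix_apply]; positivity

theorem sum_adjMatrix_mul_self_apply (i : V) :
    ∑ j, (G.adjMatrix ℝ * G.adjMatrix ℝ) i j = G.neighborDegreeSum i := by
  simp only [adjMatrix_mul_apply]
  rw [sum_comm, neighborDegreeSum, Nat.cast_sum]
  refine sum_congr rfl fun k _ => ?_
  simp [adjMatrix_apply, sum_boole, degree, neighborFinset_eq_filter]

theorem adjMatrix_mul_self_mulVec {μ : ℝ} {v : V → ℝ} (hv : G.adjMatrix ℝ *ᵥ v = μ • v) :
    (G.adjMatrix ℝ * G.adjMatrix ℝ) *ᵥ v = μ ^ 2 • v := by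
  rw [← mulVec_mulVec, hv, mulVec_smul, hv, smul_smul, sq]

theorem sum_adjMatrix_mul_self_mul_abs_le {v : V → ℝ} {i : V} (hi : ∀ j, |v j| ≤ |v i|) :
    ∑ j, (G.adjMatrix ℝ * G.adjMatrix ℝ) i j * |v j| ≤ G.neighborDegreeSum i * |v i| := by
  rw [← sum_adjMatrix_mul_self_apply, sum_mul]
  exact sum_le_sum fun j _ => mul_le_mul_of_nonneg_left (hi j) (adjMatrix_mul_self_nonneg i j)

theorem IsAcyclic.sq_le_card_sub_one [DecidableEq V] (hG : G.IsAcyclic) {μ : ℝ}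
    (hμ : μ ∈ spectrum ℝ (G.adjMatrix ℝ)) : μ ^ 2 ≤ Fintype.card V - 1 := by
  obtain ⟨v, hv0, hv⟩ := mem_spectrum_iff_exists_mulVec_eq_smul.1 hμ
  obtain ⟨x, hx⟩ := Function.ne_iff.1 hv0
  have : Nonempty V := ⟨x⟩
  obtain ⟨i, hi⟩ := Finite.exists_max fun j => |v j|
  have hvi : 0 < |v i| := (abs_pos.2 hx).trans_le (hi x)
  have hdeg : (G.neighborDegreeSum i : ℝ) ≤ Fintype.card V - 1 := by
    rw [← Nat.cast_pred Fintype.card_pos]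
    exact_mod_cast hG.neighborDegreeSum_le i
  refine le_of_mul_le_mul_right ?_ hvi
  calc μ ^ 2 * |v i| = |μ ^ 2| * |v i| := by rw [abs_of_nonneg (sq_nonneg μ)]
    _ ≤ ∑ j, (G.adjMatrix ℝ * G.adjMatrix ℝ) i j * |v j| :=
      abs_mul_abs_le_sum_mul_abs_of_mulVec_eq_smul adjMatrix_mul_self_nonneg
        (adjMatrix_mul_self_mulVec hv) i
    _ ≤ G.neighborDegreeSum i * |v i| := sum_adjMatrix_mul_self_mul_abs_le hi
    _ ≤ (Fintype.card V - 1) * |v i| := by gcongr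

theorem IsAcyclic.specRad_le [DecidableEq V] (hG : G.IsAcyclic) :
    specRad G ≤ √(Fintype.card V - 1) :=
  Real.sSup_le (fun _ hμ => Real.le_sqrt_of_sq_le (hG.sq_le_card_sub_one hμ)) (Real.sqrt_nonneg _)

theorem IsAcyclic.reachesAllInTwo_of_sq_eq (hG : G.IsAcyclic) {μ : ℝ} {v : V → ℝ}
    (hv : G.adjMatrix ℝ *ᵥ v = μ • v) (hμ : μ ^ 2 = Fintype.card V - 1) {i : V}
    (hi : ∀ j, |v j| ≤ |v i|) (hvi : v i ≠ 0) :
    G.ReachesAllInTwo i ∧ ∀ {k w}, G.Adj i k → G.Adj k w → |v w| = |v i| := by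
  have hvi' : 0 < |v i| := abs_pos.2 hvi
  have hcard : ((Fintype.card V - 1 : ℕ) : ℝ) = Fintype.card V - 1 :=
    Nat.cast_pred (Fintype.card_pos_iff.2 ⟨i⟩)
  have hlow : μ ^ 2 * |v i| ≤ ∑ j, (G.adjMatrix ℝ * G.adjMatrix ℝ) i j * |v j| := by
    rw [← abs_of_nonneg (sq_nonneg μ)]
    exact abs_mul_abs_le_sum_mul_abs_of_mulVec_eq_smul adjMatrix_mul_self_nonneg
      (adjMatrix_mul_self_mulVec hv) i
  have hdeg : (G.neighborDegreeSum i : ℝ) = Fintype.card V - 1 := by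
    refine le_antisymm ?_ (le_of_mul_le_mul_right ?_ hvi')
    · exact hcard ▸ (by exact_mod_cast hG.neighborDegreeSum_le i)
    · exact hμ ▸ hlow.trans (sum_adjMatrix_mul_self_mul_abs_le hi)
  refine ⟨hG.reachesAllInTwo_of_neighborDegreeSum_eq (by exact_mod_cast hdeg.trans hcard.symm),
    fun hik hkw => ?_⟩
  have hle : ∀ j ∈ univ, (G.adjMatrix ℝ * G.adjMatrix ℝ) i j * |v j| ≤
      (G.adjMatrix ℝ * G.adjMatrix ℝ) i j * |v i| :=
    fun j _ => mul_le_mul_of_nonneg_left (hi j) (adjMatrix_mul_self_nonneg i j)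
  have heq := le_antisymm (sum_le_sum hle) <| by
    rw [← sum_mul, sum_adjMatrix_mul_self_apply, hdeg, ← hμ]
    exact hlow
  exact mul_left_cancel₀ (adjMatrix_mul_self_pos hik hkw).ne'
    ((sum_eq_sum_iff_of_le hle).1 heq _ (mem_univ _))

theorem IsAcyclic.exists_forall_adj_of_sq_eq (hG : G.IsAcyclic) {μ : ℝ} {v : V → ℝ}
    (hv : G.adjMatrix ℝ *ᵥ v = μ • v) (hμ : μ ^ 2 = Fintype.card V - 1) (hv0 : v ≠ 0) :
    ∃ c, ∀ w, w ≠ c → G.Adj c w := by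
  obtain ⟨x, hx⟩ := Function.ne_iff.1 hv0
  have : Nonempty V := ⟨x⟩
  obtain ⟨i, hi⟩ := Finite.exists_max fun j => |v j|
  have hvi : v i ≠ 0 := abs_pos.1 ((abs_pos.2 hx).trans_le (hi x))
  obtain ⟨hreach, habs⟩ := hG.reachesAllInTwo_of_sq_eq hv hμ hi hvi
  refine hG.exists_forall_adj hreach fun hik hkw => ?_
  have hw := habs hik hkw
  refine (hG.reachesAllInTwo_of_sq_eq hv hμ (fun j => (hi j).trans hw.ge) ?_).1
  rwa [← abs_ne_zero, hw, abs_ne_zero]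

theorem IsAcyclic.nonempty_iso_star (hG : G.IsAcyclic) {c : V}
    (hc : ∀ w, w ≠ c → G.Adj c w) :
    Nonempty (G ≃g completeBipartiteGraph (Fin 1) (Fin (Fintype.card V - 1))) := by
  have e₁ : {x // x = c} ≃ Fin 1 := Fintype.equivFinOfCardEq (Fintype.card_subtype_eq c)
  have e₂ : {x // ¬x = c} ≃ Fin (Fintype.card V - 1) := Fintype.equivFinOfCardEq <| by
    rw [Fintype.card_subtype_compl, Fintype.card_subtype_eq]
  refine ⟨⟨(Equiv.sumCompl (· = c)).symm.trans (e₁.sumCongr e₂), fun {a b} => ?_⟩⟩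
  rw [hG.adj_iff_of_forall_adj hc]
  by_cases ha : a = c <;> by_cases hb : b = c <;>
    simp [Equiv.sumCompl_symm_apply_of_pos, Equiv.sumCompl_symm_apply_of_neg, ha, hb]

theorem IsAcyclic.sqrt_mem_spectrum_of_forall_adj [DecidableEq V] (hG : G.IsAcyclic) {c : V}
    (hc : ∀ w, w ≠ c → G.Adj c w) :
    √(Fintype.card V - 1) ∈ spectrum ℝ (G.adjMatrix ℝ) := by
  cases subsingleton_or_nontrivial V with
  | inl _ =>
    have : Unique V := _root_.uniqueOfSubsingleton c
    have hA : G.adjMatrix ℝ = 0 := by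
      ext i j
      simp [adjMatrix_apply, Subsingleton.elim i j]
    simp [hA, spectrum.zero_eq]
  | inr _ =>
    obtain ⟨w, hw⟩ := exists_ne c
    rw [mem_spectrum_iff_exists_mulVec_eq_smul]
    refine ⟨fun x => if x = c then √(Fintype.card V - 1) else 1, fun h => ?_, ?_⟩
    · simpa [hw] using congrFun h w
    · have hcard : (1 : ℝ) ≤ Fintype.card V := by exact_mod_cast Fintype.card_pos
      funext x
      rw [adjMatrix_mulVec_apply]
      by_cases hx : x = c
      · subst hx
        have hnbr : G.neighborFinset x = univ.erase x := by
          ext u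
          simp [hG.adj_iff_of_forall_adj hc, eq_comm]
        rw [hnbr, sum_congr rfl fun u hu => if_neg (ne_of_mem_erase hu)]
        simp [Nat.cast_pred Fintype.card_pos, Real.mul_self_sqrt (sub_nonneg.2 hcard)]
      · have hnbr : G.neighborFinset x = {c} := by
          ext u
          simp [hG.adj_iff_of_forall_adj hc, hx]
        simp [hnbr, hx]

end Finite

end SimpleGraph

theorem stmt3 {V : Type*} [Fintype V] [DecidableEq V] (T : SimpleGraph V) (n : ℕ)
    (hn : Fintype.card V = n) (hconn : T.Connected) (hac : T.IsAcyclic) :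
    specRad T ≤ Real.sqrt ((n : ℝ) - 1) ∧
      (specRad T = Real.sqrt ((n : ℝ) - 1) ↔
        Nonempty (T ≃g completeBipartiteGraph (Fin 1) (Fin (n - 1)))) := by
  subst hn
  have : Nonempty V := hconn.nonempty
  refine ⟨hac.specRad_le, fun h => ?_, fun ⟨e⟩ => ?_⟩
  · have hne : (spectrum ℝ (T.adjMatrix ℝ)).Nonempty :=
      ⟨_, (T.isHermitian_adjMatrix ℝ).eigenvalues_mem_spectrum_real (Classical.arbitrary V)⟩
    have hmem : √(Fintype.card V - 1) ∈ spectrum ℝ (T.adjMatrix ℝ) :=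
      h ▸ hne.csSup_mem (Matrix.finite_spectrum _)
    obtain ⟨v, hv0, hv⟩ := mem_spectrum_iff_exists_mulVec_eq_smul.1 hmem
    have hsq : √(Fintype.card V - 1 : ℝ) ^ 2 = Fintype.card V - 1 :=
      Real.sq_sqrt (sub_nonneg.2 (by exact_mod_cast Fintype.card_pos))
    obtain ⟨c, hc⟩ := hac.exists_forall_adj_of_sq_eq hv hsq hv0
    exact hac.nonempty_iso_star hc
  · exact le_antisymm hac.specRad_le <| le_csSup (Matrix.finite_spectrum _).bddAbove
      (hac.sqrt_mem_spectrum_of_forall_adj e.forall_adj_symm_inl)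
end

section
/- Let G be a connected graph with Perron eigenvector x of the adjacency matrix (positive, unit norm) and spectral radius ρ. Then Δ(G) − ρ(G) = Σ_{u∈V(G)} (Δ(G) − d(u)) x_u² + Σ_{uv∈E(G)} (x_u − x_v)². -/
open Matrix SimpleGraph Finset

attribute [local instance] Classical.propDecidable

/-- The diameter of a graph: the maximum distance between two vertices. -/
noncomputable def graphDiam {V : Type*} [Fintype V] (G : SimpleGraph V) : ℕ :=
  sSup (Set.range fun p : V × V => G.dist p.1 p.2)

/-- The edge-connectivity of a graph: the minimum number of edges whose deletion
disconnects the graph. -/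
noncomputable def edgeConn {V : Type*} [Fintype V] [DecidableEq V] (G : SimpleGraph V) : ℕ :=
  sInf {c | ∃ s : Finset (Sym2 V), s.card = c ∧ ↑s ⊆ G.edgeSet ∧
    ¬ (G.deleteEdges ↑s).Preconnected}

/-- `G` is distance-hereditary: in every connected induced subgraph, distances agree with
the distances in `G`. -/
def IsDistHereditary {V : Type*} (G : SimpleGraph V) : Prop :=
  ∀ s : Set V, (G.induce s).Connected → ∀ u v : s, (G.induce s).dist u v = G.dist ↑u ↑v

/-! The quadratic form of the Laplacian `L = D - A` at `x` is the edge sum `∑ (x_u - x_v)²`; at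
a unit eigenvector of `A` it also equals `∑ d(u) x_u² - ρ`. Adding `Δ = Δ ∑ x_u²` gives the identity. -/

namespace SimpleGraph

variable {V : Type*} [Fintype V] [DecidableEq V] (G : SimpleGraph V) [DecidableRel G.Adj]

theorem sum_darts_eq_sum_sum_neighborFinset {M : Type*} [AddCommMonoid M] (f : V → V → M) :
    ∑ d : G.Dart, f d.fst d.snd = ∑ v, ∑ w ∈ G.neighborFinset v, f v w := by
  rw [← Finset.sum_fiberwise_of_maps_to (g := fun d : G.Dart => d.fst) (t := Finset.univ)
    (fun d _ => Finset.mem_univ _)]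
  refine Finset.sum_congr rfl fun v _ => ?_
  rw [G.dart_fst_fiber v, Finset.sum_image fun _ _ _ _ h => G.dartOfNeighborSet_injective v h,
    neighborFinset_def, ← Finset.sum_set_coe]
  rfl

theorem sum_darts_edge {M : Type*} [AddCommMonoid M] (f : Sym2 V → M) :
    ∑ d : G.Dart, f d.edge = 2 • ∑ e ∈ G.edgeFinset, f e := by
  rw [← Finset.sum_fiberwise_of_maps_to (g := fun d : G.Dart => d.edge) (t := G.edgeFinset)
    (fun d _ => G.mem_edgeFinset.mpr d.edge_mem), Finset.smul_sum]
  refine Finset.sum_congr rfl fun e he => ?_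
  rw [Finset.sum_congr rfl fun d hd => by rw [(Finset.mem_filter.mp hd).2], Finset.sum_const,
    G.dart_edge_fiber_card e (G.mem_edgeFinset.mp he)]

theorem dotProduct_lapMatrix_mulVec_eq_sum_edgeFinset {R : Type*} [Field R] [CharZero R]
    (x : V → R) :
    x ⬝ᵥ (G.lapMatrix R *ᵥ x) =
      ∑ e ∈ G.edgeFinset, Sym2.lift ⟨fun a b => (x a - x b) ^ 2, fun a b => by ring⟩ e := by
  have hdarts : ∑ i, ∑ j, (if G.Adj i j then (x i - x j) ^ 2 else 0) =
      ∑ d : G.Dart, Sym2.lift ⟨fun a b => (x a - x b) ^ 2, fun a b => by ring⟩ d.edge := by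
    simp only [← Finset.sum_filter, ← neighborFinset_eq_filter,
      ← G.sum_darts_eq_sum_sum_neighborFinset]
    rfl
  rw [← toLinearMap₂'_apply', lapMatrix_toLinearMap₂', hdarts, G.sum_darts_edge, two_nsmul,
    ← two_mul, mul_div_cancel_left₀ _ two_ne_zero]

theorem sub_eq_sum_mul_sq_add_sum_edgeFinset_of_mulVec_eq {R : Type*} [Field R] [CharZero R]
    (c μ : R) (x : V → R) (hx : ∑ u, x u ^ 2 = 1) (heig : G.adjMatrix R *ᵥ x = μ • x) :
    c - μ = ∑ u, (c - G.degree u) * x u ^ 2 +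
      ∑ e ∈ G.edgeFinset, Sym2.lift ⟨fun a b => (x a - x b) ^ 2, fun a b => by ring⟩ e := by
  have hadj : x ⬝ᵥ (G.adjMatrix R *ᵥ x) = μ := by
    rw [heig, dotProduct_smul, smul_eq_mul, dotProduct]
    simp only [← sq, hx, mul_one]
  rw [← dotProduct_lapMatrix_mulVec_eq_sum_edgeFinset, lapMatrix, sub_mulVec, dotProduct_sub,
    dotProduct_mulVec_degMatrix, hadj]
  simp only [sub_mul, Finset.sum_sub_distrib, ← Finset.mul_sum, hx, mul_assoc, ← sq]
  ring

end SimpleGraph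

theorem stmt8 {V : Type*} [Fintype V] [DecidableEq V] (G : SimpleGraph V)
    -- `x` is the positive unit Perron eigenvector of the adjacency matrix
    (x : V → ℝ) (hxunit : ∑ w, x w ^ 2 = 1)
    (heig : G.adjMatrix ℝ *ᵥ x = specRad G • x) :
    (G.maxDegree : ℝ) - specRad G =
      (∑ u : V, ((G.maxDegree : ℝ) - (G.degree u : ℝ)) * x u ^ 2) +
      ∑ e ∈ G.edgeFinset,
        Sym2.lift ⟨fun a b => (x a - x b) ^ 2, fun a b => by ring⟩ e :=
  G.sub_eq_sum_mul_sq_add_sum_edgeFinset_of_mulVec_eq _ _ x hxunit heig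
end

section
/- Let G be a block graph and B a simplicial block of G. Then every maximum independent set S of G satisfies |S ∩ V(B)| = 1. Moreover, for any simplicial vertex v of G with N[v] = V(B), there is a maximum independent set S with S ∩ V(B) = {v}. -/
open Matrix SimpleGraph Finset

attribute [local instance] Classical.propDecidable

/-- `S` is an independent (stable) set of `G`. -/
def IsIndepSet' {V : Type*} (G : SimpleGraph V) (S : Set V) : Prop :=
  S.Pairwise fun a b => ¬ G.Adj a b

/-- The independence number of `G`. -/
noncomputable def indepNum' {V : Type*} [Fintype V] (G : SimpleGraph V) : ℕ :=
  sSup {n | ∃ S : Finset V, IsIndepSet' G ↑S ∧ S.card = n}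

/-- A set of vertices `B` is a block of `G`: a maximal set of vertices inducing a
connected subgraph with no cut vertex (a maximal 2-connected subgraph, where single
vertices and edges also count as blocks). -/
def IsBlock {V : Type*} (G : SimpleGraph V) (B : Set V) : Prop :=
  B.Nonempty ∧ (G.induce B).Preconnected ∧
    (∀ v ∈ B, (G.induce (B \ {v})).Preconnected) ∧
    ∀ C : Set V, B ⊆ C → (G.induce C).Preconnected →
      (∀ v ∈ C, (G.induce (C \ {v})).Preconnected) → B = C

/-- A block graph: a connected graph all of whose blocks are complete graphs. -/
def IsBlockGraph {V : Type*} (G : SimpleGraph V) : Prop :=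
  G.Connected ∧ ∀ B : Set V, IsBlock G B → G.IsClique B

/-- A vertex is simplicial if its neighborhood is a clique. -/
def IsSimplicial {V : Type*} (G : SimpleGraph V) (v : V) : Prop :=
  G.IsClique (G.neighborSet v)

/-- A cut vertex of a connected graph: its removal disconnects the graph. -/
def IsCutVertex {V : Type*} (G : SimpleGraph V) (v : V) : Prop :=
  G.Preconnected ∧ ¬ (G.induce {u | u ≠ v}).Preconnected

lemma clique_preconnected {V : Type*} {G : SimpleGraph V} {C : Set V}
    (h : G.IsClique C) : (G.induce C).Preconnected := by
  intro a b
  rcases eq_or_ne a b with rfl | hab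
  · exact SimpleGraph.Reachable.refl _
  · refine SimpleGraph.Adj.reachable ?_
    have : G.Adj a.1 b.1 := h a.2 b.2 (fun e => hab (Subtype.ext e))
    simpa [SimpleGraph.comap_adj] using this

lemma block_eq_nbhd {V : Type*} {G : SimpleGraph V} {B : Set V}
    (hbg : IsBlockGraph G) (hB : IsBlock G B) {v : V} (hv : v ∈ B)
    (hs : IsSimplicial G v) : B = insert v (G.neighborSet v) := by
  have hC : G.IsClique (insert v (G.neighborSet v)) :=
    hs.insert (fun b hb _ => hb)
  have hsub : B ⊆ insert v (G.neighborSet v) := by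
    intro u hu
    rcases eq_or_ne u v with rfl | h
    · exact Set.mem_insert _ _
    · exact Set.mem_insert_of_mem _ (hbg.2 B hB hv hu h.symm)
  exact hB.2.2.2 _ hsub (clique_preconnected hC)
    (fun x _ => clique_preconnected (hC.subset Set.diff_subset))

theorem stmt11 {V : Type*} [Fintype V] [DecidableEq V] (G : SimpleGraph V) (B : Set V)
    (hbg : IsBlockGraph G) (hB : IsBlock G B)
    -- `B` is a simplicial block
    (hsb : ∃ v ∈ B, IsSimplicial G v) :
    (∀ S : Finset V, IsIndepSet' G ↑S → S.card = indepNum' G → ((↑S : Set V) ∩ B).ncard = 1) ∧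
    ∀ v : V, IsSimplicial G v → insert v (G.neighborSet v) = B →
      ∃ S : Finset V, IsIndepSet' G ↑S ∧ S.card = indepNum' G ∧ (↑S : Set V) ∩ B = {v} := by
  obtain ⟨v₀, hv₀B, hv₀s⟩ := hsb
  have hBeq : B = insert v₀ (G.neighborSet v₀) := block_eq_nbhd hbg hB hv₀B hv₀s
  have hclique : G.IsClique B := hbg.2 B hB
  have hbdd : BddAbove {n | ∃ S : Finset V, IsIndepSet' G ↑S ∧ S.card = n} := by
    refine ⟨Fintype.card V, ?_⟩
    rintro n ⟨S, -, rfl⟩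
    exact S.card_le_univ
  have hne : {n | ∃ S : Finset V, IsIndepSet' G ↑S ∧ S.card = n}.Nonempty :=
    ⟨0, ∅, by simp [IsIndepSet'], by simp⟩
  -- part 1
  have part1 : ∀ S : Finset V, IsIndepSet' G ↑S → S.card = indepNum' G →
      ((↑S : Set V) ∩ B).ncard = 1 := by
    intro S hS hcard
    have hsub : ((↑S : Set V) ∩ B).Subsingleton := by
      intro a ha b hb
      by_contra h
      exact hS ha.1 hb.1 h (hclique ha.2 hb.2 h)
    have hnon : ((↑S : Set V) ∩ B).Nonempty := by
      by_contra hemp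
      rw [Set.not_nonempty_iff_eq_empty] at hemp
      have hv₀S : v₀ ∉ S := by
        intro h
        exact (Set.eq_empty_iff_forall_notMem.mp hemp v₀) ⟨h, hv₀B⟩
      have hindep : IsIndepSet' G ↑(insert v₀ S) := by
        intro a ha b hb hab
        simp only [Finset.coe_insert, Set.mem_insert_iff, Finset.mem_coe] at ha hb
        have key : ∀ u ∈ S, ¬ G.Adj v₀ u := by
          intro u hu hadj
          have : u ∈ B := by
            rw [hBeq]; exact Set.mem_insert_of_mem _ hadj
          exact (Set.eq_empty_iff_forall_notMem.mp hemp u) ⟨hu, this⟩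
        rcases ha with rfl | ha <;> rcases hb with rfl | hb
        · exact absurd rfl hab
        · exact key b hb
        · exact fun h => key a ha h.symm
        · exact hS ha hb hab
      have hle : (insert v₀ S).card ≤ indepNum' G :=
        le_csSup hbdd ⟨insert v₀ S, hindep, rfl⟩
      rw [Finset.card_insert_of_notMem hv₀S, hcard] at hle
      omega
    obtain ⟨a, ha⟩ := hnon
    rw [Set.ncard_eq_one]
    exact ⟨a, Set.eq_singleton_iff_unique_mem.mpr ⟨ha, fun b hb => hsub hb ha⟩⟩
  refine ⟨part1, ?_⟩
  intro v hvs hvB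
  -- get a maximum independent set
  have hmem : indepNum' G ∈ {n | ∃ S : Finset V, IsIndepSet' G ↑S ∧ S.card = n} :=
    Nat.sSup_mem hne hbdd
  obtain ⟨S₀, hS₀, hcard₀⟩ := hmem
  have h1 := part1 S₀ hS₀ hcard₀
  obtain ⟨u, hu⟩ := Set.ncard_eq_one.mp h1
  have huS : u ∈ S₀ := by
    have : u ∈ (↑S₀ : Set V) ∩ B := hu ▸ rfl
    exact this.1
  have huB : u ∈ B := by
    have : u ∈ (↑S₀ : Set V) ∩ B := hu ▸ rfl
    exact this.2
  rcases eq_or_ne u v with rfl | huv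
  · exact ⟨S₀, hS₀, hcard₀, hu⟩
  · -- swap u for v
    have hvS₀ : v ∉ S₀ := by
      intro h
      have : v ∈ (↑S₀ : Set V) ∩ B := ⟨h, hvB ▸ Set.mem_insert _ _⟩
      rw [hu] at this
      exact huv this.symm
    set S := insert v (S₀.erase u) with hSdef
    have hnbr : ∀ w, G.Adj v w → w ∈ B := by
      intro w hw
      rw [← hvB]; exact Set.mem_insert_of_mem _ hw
    have hkey : ∀ w ∈ S₀, w ≠ u → ¬ G.Adj v w := by
      intro w hwS hwu hadj
      have : w ∈ (↑S₀ : Set V) ∩ B := ⟨hwS, hnbr w hadj⟩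
      rw [hu] at this
      exact hwu this
    have hindep : IsIndepSet' G ↑S := by
      intro a ha b hb hab
      simp only [hSdef, Finset.coe_insert, Set.mem_insert_iff, Finset.mem_coe,
        Finset.mem_erase] at ha hb
      rcases ha with rfl | ⟨hau, haS⟩ <;> rcases hb with rfl | ⟨hbu, hbS⟩
      · exact absurd rfl hab
      · exact hkey b hbS hbu
      · exact fun h => hkey a haS hau h.symm
      · exact hS₀ haS hbS hab
    have hcardS : S.card = indepNum' G := by
      rw [hSdef, Finset.card_insert_of_notMem (by
        simp only [Finset.mem_erase]
        exact fun h => hvS₀ h.2), Finset.card_erase_of_mem huS, hcard₀]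
      have : 1 ≤ indepNum' G := by
        rw [← hcard₀]
        exact Finset.card_pos.mpr ⟨u, huS⟩
      omega
    refine ⟨S, hindep, hcardS, ?_⟩
    ext w
    simp only [Set.mem_inter_iff, hSdef, Finset.coe_insert, Set.mem_insert_iff,
      Finset.mem_coe, Finset.mem_erase, Set.mem_singleton_iff]
    constructor
    · rintro ⟨rfl | ⟨hwu, hwS⟩, hwB⟩
      · rfl
      · exfalso
        have hw : w ∈ (↑S₀ : Set V) ∩ B := ⟨hwS, hwB⟩
        rw [hu] at hw
        exact hwu hw
    · rintro rfl
      exact ⟨Or.inl rfl, hvB ▸ Set.mem_insert _ _⟩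
end

section
/- The characteristic polynomial of the adjacency matrix of the pineapple P_{n−α+1}^{α−1} is p(x) = x^{α−2} (x+1)^{n−α−1} (x³ − (n−α−1)x² − (n−1)x + (α−1)(n−α−1)), for 2 ≤ α ≤ n−2. -/
open Matrix SimpleGraph Polynomial

attribute [local instance] Classical.propDecidable

/-- The pineapple `P_q^p`: a clique on `q` vertices together with an independent set of
`p` vertices, each adjacent exactly to one fixed vertex of the clique. -/
def pineapple (q p : ℕ) : SimpleGraph (Fin q ⊕ Fin p) :=
  SimpleGraph.fromRel (fun a b =>
    match a, b with
    | Sum.inl _, Sum.inl _ => True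
    | Sum.inl i, Sum.inr _ => i.val = 0
    | _, _ => False)

section PineAux

lemma sum_ite_val_zero {K : Type*} [AddCommMonoid K] {q : ℕ} (hq : 0 < q) (c : K) :
    ∑ j : Fin q, (if (j : ℕ) = 0 then c else 0) = c := by
  rw [Finset.sum_eq_single (⟨0, hq⟩ : Fin q)]
  · simp
  · intro b _ hb
    rw [if_neg]
    exact fun h => hb (Fin.ext h)
  · simp

lemma ite_ite_same {K : Type*} (c : Prop) [Decidable c] (a b : K) :
    (if c then (if c then a else b) else b) = if c then a else b := by
  split <;> rfl

variable (q p : ℕ) (K : Type*) [Field K]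

def avv : Fin q ⊕ Fin p → K := Sum.elim 1 0
def evv : Fin q ⊕ Fin p → K := Sum.elim (fun j => if (j : ℕ) = 0 then 1 else 0) 0
def bvv : Fin q ⊕ Fin p → K := Sum.elim 0 1

def pineU : Matrix (Fin q ⊕ Fin p) (Fin 3) K :=
  Matrix.of fun i k => ![avv q p K i, evv q p K i, bvv q p K i] k
def pineV : Matrix (Fin 3) (Fin q ⊕ Fin p) K :=
  Matrix.of fun k j => ![avv q p K j, bvv q p K j, evv q p K j] k
def pineD (x : K) : Fin q ⊕ Fin p → K := Sum.elim (fun _ => x + 1) (fun _ => x)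

lemma pine_det (hq3 : 3 ≤ q) (hp1 : 1 ≤ p) (x : K) (hx : x ≠ 0) (hx1 : x + 1 ≠ 0) :
    (Matrix.diagonal (pineD q p K x) - pineU q p K * pineV q p K).det
      = x ^ (p - 1) * (x + 1) ^ (q - 2) *
        (x ^ 3 - ((q : K) - 2) * x ^ 2 - ((q : K) + (p : K) - 1) * x
          + (p : K) * ((q : K) - 2)) := by
  have hq0 : 0 < q := by omega
  have hd : ∀ i, pineD q p K x i ≠ 0 := by rintro (i | i) <;> simpa [pineD]
  set W : Matrix (Fin q ⊕ Fin p) (Fin 3) K :=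
    Matrix.of (fun i k => pineU q p K i k / pineD q p K x i) with hW
  have hDW : Matrix.diagonal (pineD q p K x) * W = pineU q p K := by
    ext i k
    rw [Matrix.diagonal_mul]
    simp only [hW, Matrix.of_apply]
    exact mul_div_cancel₀ _ (hd i)
  have hsplit : Matrix.diagonal (pineD q p K x) - pineU q p K * pineV q p K
      = Matrix.diagonal (pineD q p K x) * (1 - W * pineV q p K) := by
    rw [Matrix.mul_sub, Matrix.mul_one, ← Matrix.mul_assoc, hDW]
  rw [hsplit, Matrix.det_mul, Matrix.det_one_sub_mul_comm, Matrix.det_diagonal]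
  have hprod : ∏ i, pineD q p K x i = (x + 1) ^ q * x ^ p := by
    rw [Fintype.prod_sum_type]
    simp [pineD]
  have hVW : pineV q p K * W =
      !![(q : K) / (x + 1), 1 / (x + 1), 0;
         0, 0, (p : K) / x;
         1 / (x + 1), 1 / (x + 1), 0] := by
    ext k l
    rw [Matrix.mul_apply]
    fin_cases k <;> fin_cases l <;>
      simp [hW, pineV, pineU, avv, evv, bvv, pineD, Fintype.sum_sum_type,
        div_eq_mul_inv, ite_mul, ite_ite_same, sum_ite_val_zero hq0]
  rw [hVW]
  have hscale : !![x + 1, 0, 0; 0, x, 0; 0, 0, x + 1] *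
      (1 - !![(q : K) / (x + 1), 1 / (x + 1), 0;
              0, 0, (p : K) / x;
              1 / (x + 1), 1 / (x + 1), 0])
      = !![x + 1 - (q : K), -1, 0; 0, x, -(p : K); -1, -1, x + 1] := by
    ext k l
    fin_cases k <;> fin_cases l <;>
      simp [Matrix.mul_apply, Fin.sum_univ_three, Matrix.one_apply] <;>
      field_simp
  have hdet := congrArg Matrix.det hscale
  rw [Matrix.det_mul] at hdet
  have hdl : (!![x + 1, 0, 0; 0, x, 0; 0, 0, x + 1] : Matrix (Fin 3) (Fin 3) K).det
      = x * (x + 1) ^ 2 := by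
    simp [Matrix.det_fin_three]; ring
  have hdr : (!![x + 1 - (q : K), -1, 0; 0, x, -(p : K); -1, -1, x + 1]
      : Matrix (Fin 3) (Fin 3) K).det
      = (x + 1 - (q : K)) * (x * (x + 1) - (p : K)) - (p : K) := by
    simp [Matrix.det_fin_three]; ring
  rw [hdl, hdr] at hdet
  have e1 : (x + 1) ^ q = (x + 1) ^ (q - 2) * (x + 1) ^ 2 := by
    rw [← pow_add]; congr 1; omega
  have e2 : x ^ p = x ^ (p - 1) * x := by
    rw [← pow_succ]; congr 1; omega
  rw [hprod, e1, e2]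
  have hcub : (x + 1 - (q : K)) * (x * (x + 1) - (p : K)) - (p : K)
      = x ^ 3 - ((q : K) - 2) * x ^ 2 - ((q : K) + (p : K) - 1) * x
          + (p : K) * ((q : K) - 2) := by ring
  rw [hcub] at hdet
  linear_combination ((x + 1) ^ (q - 2) * x ^ (p - 1)) * hdet

end PineAux

theorem stmt14 (n α : ℕ) (h2 : 2 ≤ α) (hα : α ≤ n - 2) :
    Matrix.charpoly ((pineapple (n - α + 1) (α - 1)).adjMatrix ℝ) =
      X ^ (α - 2) * (X + 1) ^ (n - α - 1) *
        (X ^ 3 - C ((n : ℝ) - α - 1) * X ^ 2 - C ((n : ℝ) - 1) * X +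
          C (((α : ℝ) - 1) * ((n : ℝ) - α - 1))) := by
  have hn4 : 4 ≤ n := by omega
  set q := n - α + 1 with hqdef
  set p := α - 1 with hpdef
  have hq3 : 3 ≤ q := by omega
  have hp1 : 1 ≤ p := by omega
  set F := FractionRing (Polynomial ℝ)
  set φ := algebraMap (Polynomial ℝ) F with hφ
  have hinj : Function.Injective φ := IsFractionRing.injective _ _
  apply hinj
  set x : F := φ X with hxdef
  have hx : x ≠ 0 := by
    rw [hxdef]
    exact (map_ne_zero_iff φ hinj).mpr Polynomial.X_ne_zero
  have hx1 : x + 1 ≠ 0 := by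
    intro h
    have h1 : φ (X + 1) = 0 := by rw [map_add, _root_.map_one, ← hxdef, h]
    have h2 : (X + 1 : Polynomial ℝ) = 0 := by
      apply hinj; rw [h1, map_zero]
    have := congrArg (Polynomial.eval 0) h2
    simp at this
  have key : (charmatrix ((pineapple q p).adjMatrix ℝ)).map φ
      = Matrix.diagonal (pineD q p F x) - pineU q p F * pineV q p F := by
    ext i j
    rw [Matrix.map_apply]
    rcases i with i | i <;> rcases j with j | j
    · by_cases h : i = j
      · subst h
        rw [charmatrix_apply_eq]
        have hA : (pineapple q p).adjMatrix ℝ (Sum.inl i) (Sum.inl i) = 0 := by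
          simp [adjMatrix_apply]
        rw [hA]
        simp [pineD, pineU, pineV, avv, evv, bvv, Matrix.mul_apply, Fin.sum_univ_three,
          map_sub, map_zero, ← hxdef]
      · rw [charmatrix_apply_ne _ _ _ (by simpa using h)]
        have hA : (pineapple q p).adjMatrix ℝ (Sum.inl i) (Sum.inl j) = 1 := by
          simp [adjMatrix_apply, pineapple, SimpleGraph.fromRel_adj, h]
        rw [hA]
        simp [pineD, pineU, pineV, avv, evv, bvv, Matrix.mul_apply, Fin.sum_univ_three,
          Matrix.diagonal_apply_ne _ (by simp [h] : Sum.inl i ≠ Sum.inl j)]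
    · rw [charmatrix_apply_ne _ _ _ (by simp)]
      have hA : (pineapple q p).adjMatrix ℝ (Sum.inl i) (Sum.inr j)
          = if (i : ℕ) = 0 then 1 else 0 := by
        by_cases h0 : (i : ℕ) = 0 <;> simp at h0 <;>
          simp [adjMatrix_apply, pineapple, SimpleGraph.fromRel_adj, h0]
      rw [hA]
      by_cases h0 : (i : ℕ) = 0 <;> simp at h0 <;>
        simp [pineD, pineU, pineV, avv, evv, bvv, Matrix.mul_apply, Fin.sum_univ_three,
          Matrix.diagonal_apply_ne _ (by simp : (Sum.inl i : Fin q ⊕ Fin p) ≠ Sum.inr j), h0]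
    · rw [charmatrix_apply_ne _ _ _ (by simp)]
      have hA : (pineapple q p).adjMatrix ℝ (Sum.inr i) (Sum.inl j)
          = if (j : ℕ) = 0 then 1 else 0 := by
        by_cases h0 : (j : ℕ) = 0 <;> simp at h0 <;>
          simp [adjMatrix_apply, pineapple, SimpleGraph.fromRel_adj, h0]
      rw [hA]
      by_cases h0 : (j : ℕ) = 0 <;> simp at h0 <;>
        simp [pineD, pineU, pineV, avv, evv, bvv, Matrix.mul_apply, Fin.sum_univ_three,
          Matrix.diagonal_apply_ne _ (by simp : (Sum.inr i : Fin q ⊕ Fin p) ≠ Sum.inl j), h0]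
    · by_cases h : i = j
      · subst h
        rw [charmatrix_apply_eq]
        have hA : (pineapple q p).adjMatrix ℝ (Sum.inr i) (Sum.inr i) = 0 := by
          simp [adjMatrix_apply]
        rw [hA]
        simp [pineD, pineU, pineV, avv, evv, bvv, Matrix.mul_apply, Fin.sum_univ_three,
          map_sub, map_zero, ← hxdef]
      · rw [charmatrix_apply_ne _ _ _ (by simpa using h)]
        have hA : (pineapple q p).adjMatrix ℝ (Sum.inr i) (Sum.inr j) = 0 := by
          simp [adjMatrix_apply, pineapple, SimpleGraph.fromRel_adj]
        rw [hA]
        simp [pineD, pineU, pineV, avv, evv, bvv, Matrix.mul_apply, Fin.sum_univ_three,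
          Matrix.diagonal_apply_ne _ (by simp [h] : Sum.inr i ≠ Sum.inr j)]
  rw [show Matrix.charpoly ((pineapple q p).adjMatrix ℝ)
      = (charmatrix ((pineapple q p).adjMatrix ℝ)).det from rfl,
    RingHom.map_det, RingHom.mapMatrix_apply, key, pine_det q p F hq3 hp1 x hx hx1]
  -- now identify with the image of the RHS polynomial
  have hqc : (q : F) = (n : F) - (α : F) + 1 := by
    rw [hqdef, Nat.cast_add, Nat.cast_sub (by omega : α ≤ n), Nat.cast_one]
  have hpc : (p : F) = (α : F) - 1 := by
    rw [hpdef, Nat.cast_sub (by omega : 1 ≤ α), Nat.cast_one]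
  have he1 : p - 1 = α - 2 := by omega
  have he2 : q - 2 = n - α - 1 := by omega
  have hC1 : C ((n : ℝ) - α - 1) = ((n : Polynomial ℝ) - α - 1) := by
    simp only [_root_.map_sub, _root_.map_one, map_natCast]
  have hC2 : C ((n : ℝ) - 1) = ((n : Polynomial ℝ) - 1) := by
    simp only [_root_.map_sub, _root_.map_one, map_natCast]
  have hC3 : C (((α : ℝ) - 1) * ((n : ℝ) - α - 1))
      = ((α : Polynomial ℝ) - 1) * ((n : Polynomial ℝ) - α - 1) := by
    simp only [_root_.map_mul, _root_.map_sub, _root_.map_one, map_natCast]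
  rw [hC1, hC2, hC3]
  simp only [_root_.map_mul, map_pow, map_add, _root_.map_sub, _root_.map_one, map_natCast, ← hxdef]
  rw [he1, he2, hqc, hpc]
  ring
end

section
/- Let 2 ≤ α ≤ n − √(n−1) and β = n−α+1. Then ρ(P_{n−α+1}^{α−1}) ≤ β − 1 + (√((β²−n)² + 4(n−β)(2β−1)) − (β²−n)) / (4β−2). -/
open Matrix SimpleGraph Polynomial

attribute [local instance] Classical.propDecidable

lemma sum_ite_ne {m : ℕ} (i : Fin m) (f : Fin m → ℝ) :
    ∑ j : Fin m, (if i = j then (0:ℝ) else 1) * f j = (∑ j, f j) - f i := by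
  have h : ∀ j, (if i = j then (0:ℝ) else 1) * f j = f j - (if i = j then f j else 0) := by
    intro j; by_cases h : i = j <;> simp [h]
  simp only [h]
  rw [Finset.sum_sub_distrib, Finset.sum_ite_eq]
  simp

lemma sum_ite_val0 {m : ℕ} (hm : 0 < m) (f : Fin m → ℝ) :
    ∑ j : Fin m, (if (j:ℕ) = 0 then (1:ℝ) else 0) * f j = f ⟨0, hm⟩ := by
  have h : ∀ j : Fin m, (if (j:ℕ) = 0 then (1:ℝ) else 0) * f j
      = if (⟨0, hm⟩ : Fin m) = j then f j else 0 := by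
    intro j
    by_cases h : (j:ℕ) = 0
    · have h2 : (⟨0, hm⟩ : Fin m) = j := by
        apply Fin.ext; simp [h]
      simp [h, h2]
    · have h2 : ¬((⟨0, hm⟩ : Fin m) = j) := by
        intro he; apply h; rw [← he]
      simp [h, h2]
  simp only [h]
  rw [Finset.sum_ite_eq]; simp

lemma sum_ite_val0' {m : ℕ} (hm : 0 < m) (c : ℝ) :
    ∑ j : Fin m, (if (j:ℕ) = 0 then c else 0) = c := by
  have h := sum_ite_val0 hm (fun _ => c)
  simpa [ite_mul, zero_mul, one_mul] using h

lemma pineapple_cubic (q p : ℕ) (hq : 0 < q) (lam : ℝ)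
    (hlam : lam ∈ spectrum ℝ ((pineapple q p).adjMatrix ℝ))
    (h0 : lam ≠ 0) (h1 : lam + 1 ≠ 0) :
    lam ^ 3 - ((q:ℝ) - 2) * lam ^ 2 - ((p:ℝ) + (q:ℝ) - 1) * lam + (p:ℝ) * ((q:ℝ) - 2) = 0 := by
  classical
  set A := (pineapple q p).adjMatrix ℝ with hA
  rw [spectrum.mem_iff] at hlam
  have hdet : (algebraMap ℝ (Matrix (Fin q ⊕ Fin p) (Fin q ⊕ Fin p) ℝ) lam - A).det = 0 := by
    by_contra hdet
    exact hlam ((Matrix.isUnit_iff_isUnit_det _).mpr (isUnit_iff_ne_zero.mpr hdet))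
  obtain ⟨v, hv0, hv⟩ := (Matrix.exists_mulVec_eq_zero_iff).mpr hdet
  have hAv : A *ᵥ v = lam • v := by
    rw [Algebra.algebraMap_eq_smul_one, Matrix.sub_mulVec, Matrix.smul_mulVec,
      Matrix.one_mulVec, sub_eq_zero] at hv
    exact hv.symm
  have key : ∀ x, ∑ y, A x y * v y = lam * v x := by
    intro x
    have h := congrFun hAv x
    simpa [Matrix.mulVec, dotProduct] using h
  -- entries
  have hll : ∀ i j : Fin q, A (Sum.inl i) (Sum.inl j) = if i = j then 0 else 1 := by
    intro i j
    by_cases h : i = j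
    · subst h; rw [hA, adjMatrix_apply]; simp [pineapple]
    · rw [hA, adjMatrix_apply]; simp [pineapple, SimpleGraph.fromRel_adj, h]
  have hlr : ∀ (i : Fin q) (k : Fin p), A (Sum.inl i) (Sum.inr k)
      = if (i:ℕ) = 0 then 1 else 0 := by
    intro i k
    by_cases h : (i:ℕ) = 0 <;> (rw [hA, adjMatrix_apply]; simp [pineapple, SimpleGraph.fromRel_adj, h])
  have hrl : ∀ (k : Fin p) (j : Fin q), A (Sum.inr k) (Sum.inl j)
      = if (j:ℕ) = 0 then 1 else 0 := by
    intro k j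
    by_cases h : (j:ℕ) = 0 <;> (rw [hA, adjMatrix_apply]; simp [pineapple, SimpleGraph.fromRel_adj, h])
  have hrr : ∀ k l : Fin p, A (Sum.inr k) (Sum.inr l) = 0 := by
    intro k l
    by_cases h : k = l
    · subst h; rw [hA, adjMatrix_apply]; simp [pineapple]
    · rw [hA, adjMatrix_apply]; simp [pineapple, SimpleGraph.fromRel_adj, h]
  set S := ∑ j : Fin q, v (Sum.inl j) with hSdef
  set T := ∑ k : Fin p, v (Sum.inr k) with hTdef
  set b := v (Sum.inl ⟨0, hq⟩) with hbdef
  have eqClique : ∀ i : Fin q, lam * v (Sum.inl i) + v (Sum.inl i)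
      = S + (if (i:ℕ) = 0 then T else 0) := by
    intro i
    have h := key (Sum.inl i)
    rw [Fintype.sum_sum_type] at h
    simp only [hll, hlr] at h
    rw [sum_ite_ne] at h
    by_cases hi : (i:ℕ) = 0
    · simp only [hi, if_true, one_mul] at h ⊢
      rw [← hSdef, ← hTdef] at h
      linarith
    · simp only [hi, if_false, zero_mul, Finset.sum_const_zero] at h ⊢
      rw [← hSdef] at h
      linarith
  have eqPend : ∀ k : Fin p, lam * v (Sum.inr k) = b := by
    intro k
    have h := key (Sum.inr k)
    rw [Fintype.sum_sum_type] at h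
    simp only [hrl, hrr, zero_mul, Finset.sum_const_zero, add_zero] at h
    rw [sum_ite_val0 hq] at h
    rw [← h, hbdef]
  have hSum1 : (lam + 1) * S = (q:ℝ) * S + T := by
    have h := Finset.sum_congr rfl (fun i (_ : i ∈ Finset.univ) => eqClique i)
    rw [Finset.sum_add_distrib, Finset.sum_add_distrib, ← Finset.mul_sum, ← hSdef,
      Finset.sum_const, sum_ite_val0' hq, Finset.card_univ, Fintype.card_fin,
      nsmul_eq_mul] at h
    linarith
  have hSum2 : lam * T = (p:ℝ) * b := by
    have h := Finset.sum_congr rfl (fun k (_ : k ∈ Finset.univ) => eqPend k)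
    rw [← Finset.mul_sum, ← hTdef, Finset.sum_const, Finset.card_univ, Fintype.card_fin,
      nsmul_eq_mul] at h
    exact h
  have hb : lam * b + b = S + T := by
    have h := eqClique ⟨0, hq⟩
    simpa using h
  have hSne : S ≠ 0 := by
    intro hS0
    have hT0 : T = 0 := by rw [hS0] at hSum1; linarith
    have hb0 : b = 0 := by
      have : (lam + 1) * b = 0 := by rw [hS0, hT0] at hb; linarith
      rcases mul_eq_zero.mp this with h | h
      · exact absurd h h1
      · exact h
    apply hv0
    funext x
    cases x with
    | inl i =>
        have h := eqClique i
        rw [hS0, hT0] at h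
        have h2 : (lam + 1) * v (Sum.inl i) = 0 := by
          by_cases hi : (i:ℕ) = 0 <;> simp [hi] at h <;> linarith
        rcases mul_eq_zero.mp h2 with h3 | h3
        · exact absurd h3 h1
        · exact h3
    | inr k =>
        have h := eqPend k
        rw [hb0] at h
        rcases mul_eq_zero.mp h with h3 | h3
        · exact absurd h3 h0
        · exact h3
  -- eliminate
  have e1 : T = (lam + 1 - (q:ℝ)) * S := by linear_combination -hSum1
  have e2 : (lam ^ 2 + lam - (p:ℝ)) * b = lam * S := by
    linear_combination lam * hb + hSum2
  have e3 : (p:ℝ) * b = lam * (lam + 1 - (q:ℝ)) * S := by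
    linear_combination lam * e1 - hSum2
  have e4 : lam * (((lam ^ 2 + lam - (p:ℝ)) * (lam + 1 - (q:ℝ)) - (p:ℝ)) * S) = 0 := by
    linear_combination (p:ℝ) * e2 - (lam ^ 2 + lam - (p:ℝ)) * e3
  rcases mul_eq_zero.mp e4 with h | h
  · exact absurd h h0
  rcases mul_eq_zero.mp h with h | h
  · linear_combination h
  · exact absurd h hSne

set_option maxHeartbeats 1000000 in
theorem stmt16 (n α : ℕ) (h2 : 2 ≤ α)
    (hα : (α : ℝ) ≤ (n : ℝ) - Real.sqrt ((n : ℝ) - 1))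
    (β : ℝ) (hβ : β = (n : ℝ) - α + 1) :
    specRad (pineapple (n - α + 1) (α - 1)) ≤
      β - 1 + (Real.sqrt ((β ^ 2 - n) ^ 2 + 4 * ((n : ℝ) - β) * (2 * β - 1)) -
        (β ^ 2 - n)) / (4 * β - 2) := by
  have hαn : α ≤ n := by
    have : (α : ℝ) ≤ (n : ℝ) := hα.trans (sub_le_self _ (Real.sqrt_nonneg _))
    exact_mod_cast this
  have hn2 : 2 ≤ n := le_trans h2 hαn
  have hn2' : (2:ℝ) ≤ (n:ℝ) := by exact_mod_cast hn2
  have hs1 : (1:ℝ) ≤ Real.sqrt ((n:ℝ) - 1) := by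
    nlinarith [Real.sq_sqrt (show (0:ℝ) ≤ (n:ℝ) - 1 by linarith),
      Real.sqrt_nonneg ((n:ℝ) - 1)]
  have hβ2 : 2 ≤ β := by
    have := hα
    rw [hβ]; linarith
  have hβn : β ≤ (n:ℝ) - 1 := by
    have : (2:ℝ) ≤ (α:ℝ) := by exact_mod_cast h2
    rw [hβ]; linarith
  have hβsq : (n:ℝ) ≤ β ^ 2 := by
    have h1 : Real.sqrt ((n:ℝ) - 1) ≤ β - 1 := by rw [hβ]; linarith
    have h2' : (n:ℝ) - 1 ≤ (β - 1) ^ 2 := by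
      have := Real.sq_sqrt (by linarith : (0:ℝ) ≤ (n:ℝ) - 1)
      nlinarith [Real.sqrt_nonneg ((n:ℝ) - 1)]
    nlinarith
  have hqc : ((n - α + 1 : ℕ) : ℝ) = β := by
    rw [hβ]; push_cast [hαn]; ring
  have hpc : ((α - 1 : ℕ) : ℝ) = (n:ℝ) - β := by
    rw [hβ]; push_cast [le_trans one_le_two h2]; ring
  have hD0 : 0 ≤ (β ^ 2 - n) ^ 2 + 4 * ((n : ℝ) - β) * (2 * β - 1) := by nlinarith
  have hfrac : 0 ≤ (Real.sqrt ((β ^ 2 - n) ^ 2 + 4 * ((n : ℝ) - β) * (2 * β - 1)) -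
      (β ^ 2 - n)) / (4 * β - 2) := by
    apply div_nonneg _ (by linarith)
    have h1 : (β ^ 2 - (n:ℝ)) ≤ Real.sqrt ((β ^ 2 - n) ^ 2 + 4 * ((n : ℝ) - β) * (2 * β - 1)) := by
      have h2' : β ^ 2 - (n:ℝ) = Real.sqrt ((β ^ 2 - n) ^ 2) := by
        rw [Real.sqrt_sq (by linarith)]
      rw [h2']
      exact Real.sqrt_le_sqrt (by nlinarith)
    linarith
  rw [specRad]
  apply Real.sSup_le _ (by linarith)
  intro lam hlam
  by_cases hcase : lam ≤ β - 1
  · linarith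
  push_neg at hcase
  have hlam0 : lam ≠ 0 := by intro h; rw [h] at hcase; linarith
  have hlam1 : lam + 1 ≠ 0 := by intro h; nlinarith
  have hcubic := pineapple_cubic (n - α + 1) (α - 1) (Nat.succ_pos _) lam hlam hlam0 hlam1
  rw [hqc, hpc] at hcubic
  set θ := lam - β + 1 with hθdef
  have hθ : 0 < θ := by rw [hθdef]; linarith
  have hquad : (2 * β - 1) * θ ^ 2 + (β ^ 2 - n) * θ - ((n:ℝ) - β) = -θ ^ 3 := by
    rw [hθdef]; linear_combination hcubic
  have hsq : (2 * (2 * β - 1) * θ + (β ^ 2 - n)) ^ 2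
      ≤ (β ^ 2 - n) ^ 2 + 4 * ((n : ℝ) - β) * (2 * β - 1) := by
    nlinarith [pow_pos hθ 3]
  have hle : 2 * (2 * β - 1) * θ + (β ^ 2 - n)
      ≤ Real.sqrt ((β ^ 2 - n) ^ 2 + 4 * ((n : ℝ) - β) * (2 * β - 1)) := by
    have h1 : 2 * (2 * β - 1) * θ + (β ^ 2 - n)
        ≤ Real.sqrt ((2 * (2 * β - 1) * θ + (β ^ 2 - n)) ^ 2) := by
      rw [Real.sqrt_sq_eq_abs]; exact le_abs_self _
    exact h1.trans (Real.sqrt_le_sqrt hsq)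
  have hθle : θ ≤ (Real.sqrt ((β ^ 2 - n) ^ 2 + 4 * ((n : ℝ) - β) * (2 * β - 1)) -
      (β ^ 2 - n)) / (4 * β - 2) := by
    rw [le_div_iff₀ (by linarith : (0:ℝ) < 4 * β - 2)]
    linarith
  have : lam = β - 1 + θ := by rw [hθdef]; ring
  linarith
end

section
/- Let n − √(n−1) < α ≤ n−2 and γ = 1 − (n−α−1)/√(n−1). Then ρ(P_{n−α+1}^{α−1}) ≤ (2√(n−1) + √((α−1)γ² + (n−α)(2−γ))) / (2+γ). -/
open Matrix SimpleGraph Polynomial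

attribute [local instance] Classical.propDecidable

/-!
Write the pineapple as `P_{q+1}^p` with `q = n - α`, `p = α - 1`. Away from the eigenvalues `0`
and `-1`, an eigenvector is determined by its value at the centre, its sum over the clique and
its sum over the pendant vertices; these three numbers satisfy a `3 × 3` linear system whose
determinant is `f x = x³ - (q - 1)x² - (q + p)x + p(q - 1)`, so every other eigenvalue is a root
of `f`. With `s = √(n - 1)` we have `f (s + y) = -q(q - 1) + 2s²γ y + s(2 + γ) y² + y³`, and the
bound is `s` plus the positive root of the quadratic part; beyond it both the quadratic part and
`y³` are positive.
-/

lemma Matrix.exists_mulVec_eq_smul_of_mem_spectrum {K n : Type*} [Field K] [Fintype n]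
    [DecidableEq n] {A : Matrix n n K} {x : K} (hx : x ∈ spectrum K A) :
    ∃ v ≠ 0, A *ᵥ v = x • v := by
  rw [← Matrix.spectrum_toLin', ← Module.End.hasEigenvalue_iff_mem_spectrum] at hx
  obtain ⟨v, hv⟩ := hx.exists_hasEigenvector
  exact ⟨v, hv.2, hv.apply_eq_smul⟩

namespace Pineapple
variable {q p : ℕ}

@[simp] lemma adj_inl_inl {i j : Fin q} :
    (pineapple q p).Adj (.inl i) (.inl j) ↔ i ≠ j := by
  simp [pineapple, fromRel_adj]

@[simp] lemma adj_inl_inr {i : Fin q} {j : Fin p} :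
    (pineapple q p).Adj (.inl i) (.inr j) ↔ i.val = 0 := by
  simp [pineapple, fromRel_adj]

@[simp] lemma adj_inr_inl {i : Fin p} {j : Fin q} :
    (pineapple q p).Adj (.inr i) (.inl j) ↔ j.val = 0 := by
  simp [pineapple, fromRel_adj]

@[simp] lemma not_adj_inr_inr {i j : Fin p} : ¬ (pineapple q p).Adj (.inr i) (.inr j) := by
  simp [pineapple, fromRel_adj]

lemma adjMatrix_mulVec_inl (v : Fin (q + 1) ⊕ Fin p → ℝ) (i : Fin (q + 1)) :
    ((pineapple (q + 1) p).adjMatrix ℝ *ᵥ v) (.inl i) =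
      ∑ k, v (.inl k) - v (.inl i) + if i = 0 then ∑ j, v (.inr j) else 0 := by
  rw [mulVec, dotProduct, Fintype.sum_sum_type]
  simp only [adjMatrix_apply, adj_inl_inl, adj_inl_inr, Fin.val_eq_zero_iff, ite_mul, one_mul,
    zero_mul, ite_not, Finset.sum_ite_irrel, Finset.sum_const_zero]
  rw [Finset.sum_ite, Finset.sum_const_zero, zero_add, Finset.filter_ne,
    Finset.sum_erase_eq_sub (Finset.mem_univ i)]

lemma adjMatrix_mulVec_inr (v : Fin (q + 1) ⊕ Fin p → ℝ) (j : Fin p) :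
    ((pineapple (q + 1) p).adjMatrix ℝ *ᵥ v) (.inr j) = v (.inl 0) := by
  rw [mulVec, dotProduct, Fintype.sum_sum_type]
  simp only [adjMatrix_apply, adj_inr_inl, not_adj_inr_inr, Fin.val_eq_zero_iff, ite_mul,
    one_mul, zero_mul, if_false, Finset.sum_const_zero, add_zero, Finset.sum_ite_eq',
    Finset.mem_univ, if_true]

lemma cubic_eq_zero_of_mem_spectrum {x : ℝ}
    (hx : x ∈ spectrum ℝ ((pineapple (q + 1) p).adjMatrix ℝ)) (hx0 : x ≠ 0) (hx1 : x ≠ -1) :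
    x ^ 3 - (q - 1) * x ^ 2 - (q + p) * x + p * (q - 1) = 0 := by
  obtain ⟨v, hv0, hv⟩ := Matrix.exists_mulVec_eq_smul_of_mem_spectrum hx
  set S := ∑ k, v (.inl k)
  set T := ∑ j, v (.inr j)
  have hclique (i : Fin (q + 1)) : (x + 1) * v (.inl i) = S + if i = 0 then T else 0 := by
    have := congrFun hv (.inl i)
    rw [adjMatrix_mulVec_inl, Pi.smul_apply, smul_eq_mul] at this
    linear_combination -this
  have hpendant (j : Fin p) : x * v (.inr j) = v (.inl 0) := by
    have := congrFun hv (.inr j)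
    rw [adjMatrix_mulVec_inr, Pi.smul_apply, smul_eq_mul] at this
    linear_combination -this
  have hS : (x + 1) * S = (q + 1) * S + T := by
    simp only [S, Finset.mul_sum, hclique, Finset.sum_add_distrib, Finset.sum_ite_eq',
      Finset.mem_univ, if_true, Finset.sum_const, Finset.card_univ, Fintype.card_fin,
      nsmul_eq_mul]
    push_cast; ring
  have hT : x * T = p * v (.inl 0) := by
    simp only [T, Finset.mul_sum, hpendant, Finset.sum_const, Finset.card_univ, Fintype.card_fin,
      nsmul_eq_mul]
  have hcenter := hclique 0
  simp only [if_true] at hcenter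
  by_contra hcubic
  have hc : v (.inl 0) = 0 := by
    refine (mul_eq_zero.mp ?_).resolve_right hcubic
    linear_combination x * (x - q) * hcenter + x * hS + (x - q + 1) * hT
  have hT0 : T = 0 := by simpa [hc, hx0] using hT
  have hS0 : S = 0 := by simpa [hc, hT0] using hcenter.symm
  refine hv0 (funext fun w => ?_)
  rcases w with i | j
  · have := hclique i
    simp only [hS0, hT0, ite_self, add_zero] at this
    simpa [sub_eq_zero, hx1, add_eq_zero_iff_eq_neg] using this
  · simpa [hc, hx0] using hpendant j

end Pineapple

lemma cubic_root_le_taylor_bound {p d s γ x : ℝ} (hs0 : 0 < s) (hs : s ^ 2 = p + d) (hd : 1 ≤ d)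
    (hγ : γ * s = s - (d - 1)) (hγ2 : -2 < γ)
    (hx : x ^ 3 - (d - 1) * x ^ 2 - (d + p) * x + p * (d - 1) = 0) :
    x ≤ (2 * s + √(p * γ ^ 2 + d * (2 - γ))) / (2 + γ) := by
  set W := √(p * γ ^ 2 + d * (2 - γ))
  have hγ1 : γ ≤ 1 := by nlinarith
  have hradicand : p * γ ^ 2 + d * (2 - γ) = (s * γ) ^ 2 + d * (1 - γ) * (2 + γ) := by
    linear_combination -(γ ^ 2) * hs
  have hgap : 0 ≤ d * (1 - γ) * (2 + γ) := by
    apply mul_nonneg (mul_nonneg _ _) _ <;> linarith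
  have hW : W ^ 2 = p * γ ^ 2 + d * (2 - γ) := Real.sq_sqrt (by rw [hradicand]; positivity)
  have hsγW : s * γ ≤ W :=
    (le_abs_self _).trans (Real.abs_le_sqrt (by rw [hradicand]; linarith))
  have hfactor : (2 + γ) * (x ^ 3 - (d - 1) * x ^ 2 - (d + p) * x + p * (d - 1)) =
      s * (((2 + γ) * x - 2 * s) ^ 2 - W ^ 2) + (2 + γ) * (x - s) ^ 3 := by
    linear_combination (-(2 + γ) * x ^ 2 + p * (γ + 2)) * hγ
      + ((2 + γ) * x + s * (γ - 2)) * hs + s * hW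
  rw [le_div_iff₀ (by linarith)]
  by_contra! hlt
  have hW0 : 0 ≤ W := Real.sqrt_nonneg _
  have hxs : s < x := by nlinarith
  have h1 : 0 < s * (((2 + γ) * x - 2 * s) ^ 2 - W ^ 2) := by
    have : W < (2 + γ) * x - 2 * s := by linarith
    have := pow_lt_pow_left₀ this hW0 two_ne_zero
    exact mul_pos hs0 (by linarith)
  have h2 : 0 < (2 + γ) * (x - s) ^ 3 := mul_pos (by linarith) (pow_pos (by linarith) 3)
  rw [hx, mul_zero] at hfactor
  linarith

theorem stmt17 (n α : ℕ)
    (hα₁ : (n : ℝ) - Real.sqrt ((n : ℝ) - 1) < (α : ℝ)) (hα₂ : α ≤ n - 2)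
    (γ : ℝ) (hγ : γ = 1 - ((n : ℝ) - α - 1) / Real.sqrt ((n : ℝ) - 1)) :
    specRad (pineapple (n - α + 1) (α - 1)) ≤
      (2 * Real.sqrt ((n : ℝ) - 1) +
        Real.sqrt (((α : ℝ) - 1) * γ ^ 2 + ((n : ℝ) - α) * (2 - γ))) / (2 + γ) := by
  have hα1 : 1 ≤ α := by
    refine Nat.one_le_iff_ne_zero.2 fun hα0 => ?_
    have : √((n : ℝ) - 1) ≤ n := Real.sqrt_le_iff.2 ⟨by positivity, by nlinarith⟩
    simp only [hα0, CharP.cast_eq_zero] at hα₁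
    linarith
  have hn : (α : ℝ) + 2 ≤ n := by exact_mod_cast (by omega : α + 2 ≤ n)
  set s := √((n : ℝ) - 1)
  have hs : s ^ 2 = (n : ℝ) - 1 := Real.sq_sqrt (by linarith)
  have hs0 : 0 < s := Real.sqrt_pos.2 (by linarith)
  have hγs : γ * s = s - ((n - α : ℝ) - 1) := by
    rw [hγ]; field_simp
  have hγ0 : 0 < γ := by nlinarith
  unfold specRad
  refine Real.sSup_le (fun x hx => ?_) (by positivity)
  by_cases hx0 : x = 0
  · rw [hx0]; positivity
  by_cases hx1 : x = -1
  · rw [hx1]; exact (neg_nonpos.2 zero_le_one).trans (by positivity)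
  have hcubic := Pineapple.cubic_eq_zero_of_mem_spectrum hx hx0 hx1
  rw [Nat.cast_sub (by omega), Nat.cast_sub hα1, Nat.cast_one] at hcubic
  exact cubic_root_le_taylor_bound hs0 (by linear_combination hs) (by linarith) hγs
    (by linarith) hcubic
end

section
/- For 2 ≤ α ≤ n−2, the spectral radius of the pineapple P_{n−α+1}^{α−1} equals the largest positive root of the cubic q(x) = x³ − (n−α−1)x² − (n−1)x + (α−1)(n−α−1). -/
open Matrix SimpleGraph Polynomial

attribute [local instance] Classical.propDecidable

/-- The relevant cubic `x³ - (q-2)x² - (q-1+p)x + p(q-2)`. -/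
def Qcub (q p : ℕ) (x : ℝ) : ℝ :=
  x ^ 3 - ((q : ℝ) - 2) * x ^ 2 - ((q : ℝ) - 1 + (p : ℝ)) * x + (p : ℝ) * ((q : ℝ) - 2)

lemma sum_ite_fin {m : ℕ} (z : Fin m) (A B : ℝ) :
    ∑ i : Fin m, (if i = z then A else B) = (m : ℝ) * B + (A - B) := by
  have h : ∀ i : Fin m, (if i = z then A else B) = B + (if i = z then A - B else 0) := by
    intro i; split <;> ring
  simp_rw [h, Finset.sum_add_distrib, Finset.sum_const, Finset.sum_ite_eq',
    Finset.mem_univ, if_true, Finset.card_univ, Fintype.card_fin, nsmul_eq_mul]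

variable {q p : ℕ}

lemma pin_mulVec_apply [inst : DecidableRel (pineapple q p).Adj]
    (v : Fin q ⊕ Fin p → ℝ) (u : Fin q ⊕ Fin p) :
    ((pineapple q p).adjMatrix ℝ *ᵥ v) u
      = (∑ i : Fin q, if (pineapple q p).Adj u (.inl i) then v (.inl i) else 0)
      + (∑ j : Fin p, if (pineapple q p).Adj u (.inr j) then v (.inr j) else 0) := by
  rw [adjMatrix_mulVec_apply, neighborFinset_eq_filter, Finset.sum_filter,
    Fintype.sum_sum_type]

lemma pin_mulVec_inl [inst : DecidableRel (pineapple q p).Adj] (hq : 0 < q)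
    (v : Fin q ⊕ Fin p → ℝ) (i : Fin q) :
    ((pineapple q p).adjMatrix ℝ *ᵥ v) (.inl i)
      = ((∑ i' : Fin q, v (.inl i')) - v (.inl i))
        + (if i = (⟨0, hq⟩ : Fin q) then ∑ j : Fin p, v (.inr j) else 0) := by
  rw [pin_mulVec_apply]
  congr 1
  · have h1 : ∀ i' : Fin q,
        (if (pineapple q p).Adj (.inl i) (.inl i') then v (.inl i') else 0)
        = v (.inl i') - (if i' = i then v (.inl i') else 0) := by
      intro i'
      by_cases h : i = i'
      · subst h; simp [pineapple]
      · rw [if_pos (by simp [pineapple, h]), if_neg (Ne.symm h)]; ring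
    simp_rw [h1, Finset.sum_sub_distrib, Finset.sum_ite_eq', Finset.mem_univ, if_true]
  · have h2 : ∀ j : Fin p,
        (if (pineapple q p).Adj (.inl i) (.inr j) then v (.inr j) else 0)
        = (if i = (⟨0, hq⟩ : Fin q) then v (.inr j) else 0) := by
      intro j
      have : (pineapple q p).Adj (.inl i) (.inr j) ↔ i = (⟨0, hq⟩ : Fin q) := by
        simp [pineapple, Fin.ext_iff]
      simp only [this]
    simp_rw [h2]
    split <;> simp

lemma pin_mulVec_inr [inst : DecidableRel (pineapple q p).Adj] (hq : 0 < q)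
    (v : Fin q ⊕ Fin p → ℝ) (j : Fin p) :
    ((pineapple q p).adjMatrix ℝ *ᵥ v) (.inr j) = v (.inl ⟨0, hq⟩) := by
  rw [pin_mulVec_apply]
  have h2 : ∀ j' : Fin p,
      (if (pineapple q p).Adj (.inr j) (.inr j') then v (.inr j') else 0) = 0 := by
    intro j'; rw [if_neg]; simp [pineapple]
  have h1 : ∀ i : Fin q,
      (if (pineapple q p).Adj (.inr j) (.inl i) then v (.inl i) else 0)
      = (if i = (⟨0, hq⟩ : Fin q) then v (.inl i) else 0) := by
    intro i
    have : (pineapple q p).Adj (.inr j) (.inl i) ↔ i = (⟨0, hq⟩ : Fin q) := by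
      simp [pineapple, Fin.ext_iff]
    simp only [this]
  simp_rw [h1, h2, Finset.sum_ite_eq', Finset.mem_univ, if_true,
    Finset.sum_const_zero, add_zero]

lemma mem_spectrum_iff' {m : Type*} [Fintype m] [DecidableEq m]
    (M : Matrix m m ℝ) (x : ℝ) :
    x ∈ spectrum ℝ M ↔ ∃ v : m → ℝ, v ≠ 0 ∧ M *ᵥ v = x • v := by
  rw [spectrum.mem_iff]
  have halg : (algebraMap ℝ (Matrix m m ℝ)) x = x • (1 : Matrix m m ℝ) := by
    rw [Algebra.algebraMap_eq_smul_one]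
  rw [halg]
  rw [Matrix.isUnit_iff_isUnit_det, isUnit_iff_ne_zero, not_not,
    ← Matrix.exists_mulVec_eq_zero_iff]
  constructor
  · rintro ⟨v, hv, h⟩
    refine ⟨v, hv, ?_⟩
    rw [sub_mulVec, smul_mulVec, one_mulVec, sub_eq_zero] at h
    exact h.symm
  · rintro ⟨v, hv, h⟩
    refine ⟨v, hv, ?_⟩
    rw [sub_mulVec, smul_mulVec, one_mulVec, sub_eq_zero, h]

lemma hq_cast (hq : 3 ≤ q) : (3 : ℝ) ≤ (q : ℝ) := by exact_mod_cast hq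

lemma hp_cast (hp : 0 < p) : (1 : ℝ) ≤ (p : ℝ) := by exact_mod_cast hp

lemma root_mem_spectrum [inst : DecidableRel (pineapple q p).Adj]
    (hq : 3 ≤ q) (hp : 0 < p) {x : ℝ} (hx : Qcub q p x = 0) :
    x ∈ spectrum ℝ ((pineapple q p).adjMatrix ℝ) := by
  have hq0 : 0 < q := by omega
  have hqR := hq_cast hq
  have hpR := hp_cast hp
  have hxc : x ≠ (q : ℝ) - 2 := by
    intro h
    rw [Qcub, h] at hx
    nlinarith [hx]
  set z : Fin q := (⟨0, hq0⟩ : Fin q) with hz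
  set v : Fin q ⊕ Fin p → ℝ := fun u => match u with
    | .inl i => if i = z then x * (x - ((q : ℝ) - 2)) else x
    | .inr _ => x - ((q : ℝ) - 2) with hvdef
  rw [mem_spectrum_iff']
  refine ⟨v, ?_, ?_⟩
  · intro h0
    have h1 : v (.inr ⟨0, hp⟩) = 0 := by rw [h0]; rfl
    simp only [hvdef] at h1
    exact hxc (by linarith [sub_eq_zero.mp h1])
  · funext u
    cases u with
    | inl i =>
      rw [pin_mulVec_inl hq0]
      have hS : (∑ i' : Fin q, v (.inl i'))
          = (q : ℝ) * x + (x * (x - ((q : ℝ) - 2)) - x) := by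
        simp only [hvdef]
        exact sum_ite_fin z _ _
      have hT : (∑ j : Fin p, v (.inr j)) = (p : ℝ) * (x - ((q : ℝ) - 2)) := by
        simp only [hvdef]
        rw [Finset.sum_const, Finset.card_univ, Fintype.card_fin, nsmul_eq_mul]
      rw [hS, hT]
      simp only [Pi.smul_apply, smul_eq_mul, hvdef]
      by_cases hi : i = z
      · rw [if_pos hi, if_pos hi]
        rw [Qcub] at hx
        linear_combination -hx
      · rw [if_neg hi, if_neg hi]
        ring
    | inr j =>
      rw [pin_mulVec_inr hq0]
      simp only [Pi.smul_apply, smul_eq_mul, hvdef, if_pos rfl]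
      simp [hz]

lemma spectrum_cases [inst : DecidableRel (pineapple q p).Adj]
    (hq : 3 ≤ q) (hp : 0 < p) {x : ℝ}
    (hx : x ∈ spectrum ℝ ((pineapple q p).adjMatrix ℝ)) :
    x = -1 ∨ x = 0 ∨ Qcub q p x = 0 := by
  have hq0 : 0 < q := by omega
  have hqR := hq_cast hq
  rw [mem_spectrum_iff'] at hx
  obtain ⟨v, hv0, hv⟩ := hx
  by_contra hcon
  push_neg at hcon
  obtain ⟨h1, h0, hQ⟩ := hcon
  have hx1 : x + 1 ≠ 0 := fun h => h1 (by linarith [h])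
  set z : Fin q := (⟨0, hq0⟩ : Fin q) with hz
  set a := v (.inl z) with ha
  set S := ∑ i : Fin q, v (.inl i) with hS
  set T := ∑ j : Fin p, v (.inr j) with hT
  have heq : ∀ u, ((pineapple q p).adjMatrix ℝ *ᵥ v) u = x * v u := by
    intro u; rw [hv]; simp
  have eqinl : ∀ i : Fin q,
      (S - v (.inl i)) + (if i = z then T else 0) = x * v (.inl i) := by
    intro i
    have := heq (.inl i)
    rwa [pin_mulVec_inl hq0] at this
  have eqinr : ∀ j : Fin p, a = x * v (.inr j) := by
    intro j
    have := heq (.inr j)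
    rwa [pin_mulVec_inr hq0] at this
  have eq1 : S - a + T = x * a := by
    have := eqinl z
    rwa [if_pos rfl] at this
  have eq4 : (q : ℝ) * S - S + T = x * S := by
    have hsum : ∑ i : Fin q, ((S - v (.inl i)) + (if i = z then T else 0))
        = ∑ i : Fin q, x * v (.inl i) :=
      Finset.sum_congr rfl (fun i _ => eqinl i)
    simp only [Finset.sum_add_distrib, Finset.sum_sub_distrib, Finset.sum_const,
      Finset.sum_ite_eq', Finset.mem_univ, if_true, ← Finset.mul_sum,
      Finset.card_univ, Fintype.card_fin, nsmul_eq_mul, ← hS] at hsum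
    exact hsum
  have eq3 : (p : ℝ) * a = x * T := by
    have hsum : ∑ _j : Fin p, a = ∑ j : Fin p, x * v (.inr j) :=
      Finset.sum_congr rfl (fun j _ => eqinr j)
    simp only [Finset.sum_const, Finset.card_univ, Fintype.card_fin, nsmul_eq_mul,
      ← Finset.mul_sum, ← hT] at hsum
    exact hsum
  have eqA : (x - ((q : ℝ) - 2)) * S = (x + 1) * a := by linear_combination eq1 - eq4
  have eqB : x * S = (x ^ 2 + x - (p : ℝ)) * a := by linear_combination x * eq1 + eq3
  have hA : a ≠ 0 := by
    intro h
    have hS0 : S = 0 := by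
      have hxS : x * S = 0 := by rw [eqB, h, mul_zero]
      rcases mul_eq_zero.mp hxS with h' | h'
      · exact absurd h' h0
      · exact h'
    apply hv0
    funext u
    cases u with
    | inl i =>
      by_cases hi : i = z
      · show v (.inl i) = 0
        rw [hi, ← ha, h]
      · have := eqinl i
        rw [if_neg hi, hS0, add_zero, zero_sub] at this
        have h2 : (x + 1) * v (.inl i) = 0 := by linear_combination -this
        show v (.inl i) = 0
        rcases mul_eq_zero.mp h2 with h' | h'
        · exact absurd h' hx1
        · exact h'
    | inr j =>
      have := eqinr j
      rw [h] at this
      show v (.inr j) = 0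
      rcases mul_eq_zero.mp this.symm with h' | h'
      · exact absurd h' h0
      · exact h'
  have hxc : x ≠ (q : ℝ) - 2 := by
    intro h
    rw [h] at eqA
    have : ((q : ℝ) - 2 + 1) * a = 0 := by linear_combination -eqA
    rcases mul_eq_zero.mp this with h' | h'
    · nlinarith
    · exact hA h'
  have key : (x * (x + 1)) * a = ((x - ((q : ℝ) - 2)) * (x ^ 2 + x - (p : ℝ))) * a := by
    have : x * ((x + 1) * a) = (x - ((q : ℝ) - 2)) * ((x ^ 2 + x - (p : ℝ)) * a) := by
      rw [← eqA, ← eqB]; ring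
    linear_combination this
  have hkey := mul_right_cancel₀ hA key
  exact hQ (by rw [Qcub]; linear_combination -hkey)

lemma Q_exists_root (hq : 3 ≤ q) (hp : 0 < p) :
    ∃ x : ℝ, 0 < x ∧ Qcub q p x = 0 := by
  have hqR := hq_cast hq
  have hpR := hp_cast hp
  have hcont : ContinuousOn (Qcub q p) (Set.Icc ((q : ℝ) - 1) ((q : ℝ) - 1 + p)) := by
    apply Continuous.continuousOn
    unfold Qcub
    fun_prop
  have hle : (q : ℝ) - 1 ≤ (q : ℝ) - 1 + p := by linarith
  have hA : Qcub q p ((q : ℝ) - 1) = -(p : ℝ) := by rw [Qcub]; ring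
  have hB : Qcub q p ((q : ℝ) - 1 + p)
      = (p : ℝ) * ((q : ℝ) - 1 + p) ^ 2 + (p : ℝ) * ((q : ℝ) - 2) := by
    rw [Qcub]; ring
  have h0mem : (0 : ℝ) ∈ Set.Icc (Qcub q p ((q : ℝ) - 1)) (Qcub q p ((q : ℝ) - 1 + p)) := by
    rw [hA, hB]
    constructor
    · linarith
    · nlinarith
  obtain ⟨x, hxmem, hxroot⟩ := intermediate_value_Icc hle hcont h0mem
  exact ⟨x, by have := hxmem.1; linarith, hxroot⟩

lemma Q_finite (hq : 3 ≤ q) : {x : ℝ | Qcub q p x = 0}.Finite := by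
  have hqR := hq_cast hq
  set P : ℝ[X] := X ^ 3 - C ((q : ℝ) - 2) * X ^ 2 - C ((q : ℝ) - 1 + (p : ℝ)) * X
      + C ((p : ℝ) * ((q : ℝ) - 2)) with hP
  have heval : ∀ x : ℝ, P.eval x = Qcub q p x := by
    intro x
    rw [hP, Qcub]
    simp
  have hPne : P ≠ 0 := by
    intro h
    have h2 := heval ((q : ℝ) - 2)
    rw [h, eval_zero, Qcub] at h2
    nlinarith [h2.symm]
  refine Set.Finite.subset (Polynomial.finite_setOf_isRoot hPne) ?_
  intro x hx
  simp only [Set.mem_setOf_eq, IsRoot.def, heval]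
  exact hx

theorem stmt18 (n α : ℕ) (h2 : 2 ≤ α) (hα : α ≤ n - 2) :
    IsGreatest {x : ℝ | 0 < x ∧
        x ^ 3 - ((n : ℝ) - α - 1) * x ^ 2 - ((n : ℝ) - 1) * x +
          ((α : ℝ) - 1) * ((n : ℝ) - α - 1) = 0}
      (specRad (pineapple (n - α + 1) (α - 1))) := by
  have hn4 : 4 ≤ n := by omega
  have hn : α + 2 ≤ n := by omega
  set q : ℕ := n - α + 1 with hqdef
  set p : ℕ := α - 1 with hpdef
  have hq : 3 ≤ q := by omega
  have hp : 0 < p := by omega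
  have hqc : (q : ℝ) = (n : ℝ) - (α : ℝ) + 1 := by
    rw [hqdef]
    push_cast [Nat.cast_sub (show α ≤ n by omega)]
    ring
  have hpc : (p : ℝ) = (α : ℝ) - 1 := by
    rw [hpdef]
    push_cast [Nat.cast_sub (show 1 ≤ α by omega)]
    ring
  have hpt : ∀ x : ℝ,
      x ^ 3 - ((n : ℝ) - α - 1) * x ^ 2 - ((n : ℝ) - 1) * x +
          ((α : ℝ) - 1) * ((n : ℝ) - α - 1) = Qcub q p x := by
    intro x
    rw [Qcub, hqc, hpc]
    ring
  obtain ⟨x₀, hx₀pos, hx₀⟩ := Q_exists_root hq hp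
  show IsGreatest _ (sSup (spectrum ℝ ((pineapple q p).adjMatrix ℝ)))
  set M := (pineapple q p).adjMatrix ℝ with hM
  have hsub : spectrum ℝ M ⊆ ({-1, 0} : Set ℝ) ∪ {x : ℝ | Qcub q p x = 0} := by
    intro x hx
    rcases spectrum_cases hq hp hx with h | h | h
    · exact Or.inl (Or.inl h)
    · exact Or.inl (Or.inr h)
    · exact Or.inr h
  have hfin : (spectrum ℝ M).Finite :=
    Set.Finite.subset (Set.Finite.union (Set.toFinite _) (Q_finite hq)) hsub
  have hbdd : BddAbove (spectrum ℝ M) := hfin.bddAbove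
  have hx₀mem : x₀ ∈ spectrum ℝ M := root_mem_spectrum hq hp hx₀
  have hne : (spectrum ℝ M).Nonempty := ⟨x₀, hx₀mem⟩
  have hmem : sSup (spectrum ℝ M) ∈ spectrum ℝ M := hne.csSup_mem hfin
  have hge : x₀ ≤ sSup (spectrum ℝ M) := le_csSup hbdd hx₀mem
  have hpos : 0 < sSup (spectrum ℝ M) := lt_of_lt_of_le hx₀pos hge
  constructor
  · refine ⟨hpos, ?_⟩
    rw [hpt]
    rcases spectrum_cases hq hp hmem with h | h | h
    · rw [h] at hpos; norm_num at hpos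
    · rw [h] at hpos; norm_num at hpos
    · exact h
  · rintro y ⟨hy0, hyQ⟩
    rw [hpt y] at hyQ
    exact le_csSup hbdd (root_mem_spectrum hq hp hyQ)
end
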